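/- arXiv:2203.02534 — 6 statements merged into one kernel-verified Lean document; each statement's English description precedes it below -/
import Mathlib

section
/- For all α, β > 0 and every function f : ℤ≥0 → ℝ, the discrete dilation operators satisfy the multiplicative semigroup property 𝔻_{αβ} f = 𝔻_α (𝔻_β f), where 𝔻_α f(n) = ∑_{r=0}^n C(n,r) α^r (1-α)^{n-r} f(r). -/
/-- The discrete dilation operator. -/
noncomputable def DD (α : ℝ) (f : ℕ → ℝ) (n : ℕ) : ℝ :=
  ∑ r ∈ Finset.range (n + 1), (n.choose r : ℝ) * α ^ r * (1 - α) ^ (n - r) * f r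

/-!
Expanding `𝔻_α (𝔻_β f) n` gives a double sum over `r ≤ k ≤ n`. After exchanging the sums, the
coefficient of `f r` is, by `C(n,k) C(k,r) = C(n,r) C(n-r,k-r)`, equal to `C(n,r) (αβ)^r` times a
binomial expansion of `(α(1-β) + (1-α))^(n-r) = (1-αβ)^(n-r)`. Probabilistically: thinning a
binomial sample with rates `α` and then `β` is thinning with rate `αβ`.
-/

open Finset

theorem sum_Ico_choose_mul_choose_mul_pow (α β : ℝ) {r n : ℕ} (hrn : r ≤ n) :
    ∑ k ∈ Ico r (n + 1),
        (n.choose k : ℝ) * α ^ k * (1 - α) ^ (n - k) * ((k.choose r : ℝ) * β ^ r * (1 - β) ^ (k - r))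
      = (n.choose r : ℝ) * (α * β) ^ r * (1 - α * β) ^ (n - r) := by
  rw [sum_Ico_eq_sum_range, show n + 1 - r = n - r + 1 by omega,
    show 1 - α * β = α * (1 - β) + (1 - α) by ring, add_pow, mul_sum]
  refine sum_congr rfl fun j _ => ?_
  have hchoose : (n.choose (r + j) : ℝ) * ((r + j).choose r : ℝ)
      = (n.choose r : ℝ) * ((n - r).choose j : ℝ) := by
    have := Nat.choose_mul (n := n) (Nat.le_add_right r j)
    rw [Nat.add_sub_cancel_left] at this
    exact_mod_cast this
  rw [← Nat.sub_sub, Nat.add_sub_cancel_left, pow_add, mul_pow, mul_pow]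
  linear_combination (α ^ r * α ^ j * (1 - α) ^ (n - r - j) * β ^ r * (1 - β) ^ j) * hchoose

theorem discrete_dilation_semigroup_general (α β : ℝ)
    (f : ℕ → ℝ) (n : ℕ) :
    DD (α * β) f n = DD α (DD β f) n := by
  simp only [DD, mul_sum, ← Nat.Ico_zero_eq_range]
  rw [← sum_Ico_Ico_comm]
  refine sum_congr rfl fun r hr => ?_
  have hrn : r ≤ n := by rw [mem_Ico] at hr; omega
  simp only [← mul_assoc, ← sum_mul]
  rw [← sum_Ico_choose_mul_choose_mul_pow α β hrn]
  simp only [mul_assoc]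

/-- Multiplicative semigroup property of the discrete dilation operators:
`𝔻_{αβ} f = 𝔻_α (𝔻_β f)` for all `α, β > 0`. -/
theorem discrete_dilation_semigroup (α β : ℝ) (hα : 0 < α) (hβ : 0 < β)
    (f : ℕ → ℝ) (n : ℕ) :
    DD (α * β) f n = DD α (DD β f) n :=
  discrete_dilation_semigroup_general α β f n
end

section
/- The Poisson kernel Λ is a contraction from ℓ²(ℤ≥0, counting measure) to L²(ℝ≥0, Lebesgue): for every f ∈ ℓ²(ℤ≥0), ∫_0^∞ (∑_{n≥0} e^{-x} x^n f(n)/n!)² dx ≤ ∑_{n≥0} f(n)². -/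
open MeasureTheory

/-- The Poissonization kernel `Λ f(x) = E[f(Pois(x))]`. -/
noncomputable def Lam (f : ℕ → ℝ) (x : ℝ) : ℝ :=
  ∑' n : ℕ, Real.exp (-x) * x ^ n / (n.factorial : ℝ) * f n

/-!
For `x ≥ 0` the Poisson weights `e^{-x} x^n / n!` form a probability distribution on `ℕ`, so
Jensen's inequality gives `(Λ f x)² ≤ ∑ₙ e^{-x} x^n / n! · f(n)²`. Integrating over `x > 0` and
exchanging sum and integral (Tonelli, in `ℝ≥0∞`), each weight integrates to `Γ(n + 1) / n! = 1`,
which leaves `∑ₙ f(n)²`.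
-/

open Real Set Finset

theorem sq_tsum_mul_le_tsum_mul_sq {ι : Type*} {w g : ι → ℝ} (hw₀ : ∀ i, 0 ≤ w i)
    (hw : Summable w) (hw₁ : ∑' i, w i ≤ 1) (hwg : Summable fun i => w i * g i ^ 2) :
    (∑' i, w i * g i) ^ 2 ≤ ∑' i, w i * g i ^ 2 := by
  have hwg₀ : ∀ i, 0 ≤ w i * g i ^ 2 := fun i => mul_nonneg (hw₀ i) (sq_nonneg _)
  by_cases hs : Summable fun i => w i * g i
  swap
  · -- the `tsum` of a non-summable family is `0`
    rw [tsum_eq_zero_of_not_summable hs, sq, zero_mul]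
    exact tsum_nonneg hwg₀
  refine le_of_tendsto' (((continuous_pow 2).tendsto _).comp hs.hasSum) fun s => ?_
  calc (∑ i ∈ s, w i * g i) ^ 2
      ≤ (∑ i ∈ s, w i) * ∑ i ∈ s, w i * g i ^ 2 :=
        sum_sq_le_sum_mul_sum_of_sq_le_mul s (fun i _ => hw₀ i) (fun i _ => hwg₀ i)
          fun i _ => by rw [mul_pow, sq (w i), mul_assoc]
    _ ≤ 1 * ∑' i, w i * g i ^ 2 :=
        mul_le_mul ((hw.sum_le_tsum s fun i _ => hw₀ i).trans hw₁)
          (hwg.sum_le_tsum s fun i _ => hwg₀ i) (sum_nonneg fun i _ => hwg₀ i) zero_le_one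
    _ = ∑' i, w i * g i ^ 2 := one_mul _

noncomputable def poissonWeight (x : ℝ) (n : ℕ) : ℝ := exp (-x) * x ^ n / n.factorial

lemma hasSum_poissonWeight {x : ℝ} (hx : 0 ≤ x) : HasSum (poissonWeight x) 1 :=
  ProbabilityTheory.hasSum_one_poissonMeasure ⟨x, hx⟩

lemma poissonWeight_nonneg {x : ℝ} (hx : 0 ≤ x) (n : ℕ) : 0 ≤ poissonWeight x n := by
  unfold poissonWeight
  positivity

lemma summable_poissonWeight_mul {g : ℕ → ℝ} (hg : Summable g) (hg₀ : ∀ n, 0 ≤ g n) {x : ℝ}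
    (hx : 0 ≤ x) : Summable fun n => poissonWeight x n * g n :=
  hg.of_nonneg_of_le (fun n => mul_nonneg (poissonWeight_nonneg hx n) (hg₀ n)) fun n =>
    mul_le_of_le_one_left (hg₀ n)
      (le_hasSum (hasSum_poissonWeight hx) n fun m _ => poissonWeight_nonneg hx m)

lemma sq_lam_le {f : ℕ → ℝ} (hf : Summable fun n => f n ^ 2) {x : ℝ} (hx : 0 ≤ x) :
    Lam f x ^ 2 ≤ ∑' n, poissonWeight x n * f n ^ 2 :=
  sq_tsum_mul_le_tsum_mul_sq (poissonWeight_nonneg hx) (hasSum_poissonWeight hx).summable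
    (hasSum_poissonWeight hx).tsum_eq.le
    (summable_poissonWeight_mul hf (fun n => sq_nonneg (f n)) hx)

lemma ofReal_sq_lam_le {f : ℕ → ℝ} (hf : Summable fun n => f n ^ 2) {x : ℝ} (hx : 0 ≤ x) :
    ENNReal.ofReal (Lam f x ^ 2) ≤
      ∑' n, ENNReal.ofReal (poissonWeight x n) * ENNReal.ofReal (f n ^ 2) := by
  have hw₀ := poissonWeight_nonneg hx
  calc ENNReal.ofReal (Lam f x ^ 2) ≤ ENNReal.ofReal (∑' n, poissonWeight x n * f n ^ 2) :=
        ENNReal.ofReal_le_ofReal (sq_lam_le hf hx)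
    _ = ∑' n, ENNReal.ofReal (poissonWeight x n) * ENNReal.ofReal (f n ^ 2) := by
      rw [ENNReal.ofReal_tsum_of_nonneg (fun n => mul_nonneg (hw₀ n) (sq_nonneg _))
        (summable_poissonWeight_mul hf (fun n => sq_nonneg (f n)) hx)]
      simp_rw [ENNReal.ofReal_mul (hw₀ _)]

lemma integrableOn_exp_neg_mul_pow (n : ℕ) :
    IntegrableOn (fun x : ℝ => exp (-x) * x ^ n) (Ioi 0) := by
  simpa [← rpow_natCast] using GammaIntegral_convergent (s := n + 1) (by positivity)

lemma integral_exp_neg_mul_pow_Ioi (n : ℕ) :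
    ∫ x in Ioi (0 : ℝ), exp (-x) * x ^ n = n.factorial := by
  rw [← Gamma_nat_eq_factorial, Gamma_eq_integral (by positivity)]
  refine setIntegral_congr_fun measurableSet_Ioi fun x _ => ?_
  simp [← rpow_natCast]

lemma lintegral_poissonWeight (n : ℕ) :
    ∫⁻ x in Ioi (0 : ℝ), ENNReal.ofReal (poissonWeight x n) = 1 := by
  have hint : IntegrableOn (poissonWeight · n) (Ioi 0) :=
    (integrableOn_exp_neg_mul_pow n).div_const _
  have hw₀ : ∀ᵐ x ∂volume.restrict (Ioi 0), 0 ≤ poissonWeight x n :=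
    (ae_restrict_iff' measurableSet_Ioi).2 (ae_of_all _ fun x hx => poissonWeight_nonneg hx.le n)
  rw [← ofReal_integral_eq_lintegral_ofReal hint hw₀]
  simp only [poissonWeight]
  rw [integral_div, integral_exp_neg_mul_pow_Ioi, div_self (by positivity), ENNReal.ofReal_one]

/-- `Λ` is a contraction from `ℓ²(ℤ₊)` to `L²(ℝ₊)`:
`∫_0^∞ (Λ f x)² dx ≤ ∑ f(n)²`. -/
theorem poisson_kernel_contraction (f : ℕ → ℝ) (hf : Summable fun n => f n ^ 2) :
    ∫⁻ x in Set.Ioi (0 : ℝ), ENNReal.ofReal ((Lam f x) ^ 2) ≤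
      ENNReal.ofReal (∑' n, f n ^ 2) := by
  calc ∫⁻ x in Ioi 0, ENNReal.ofReal (Lam f x ^ 2)
      ≤ ∫⁻ x in Ioi 0, ∑' n, ENNReal.ofReal (poissonWeight x n) * ENNReal.ofReal (f n ^ 2) :=
        setLIntegral_mono' measurableSet_Ioi fun x hx => ofReal_sq_lam_le hf hx.le
    _ = ∑' n, ENNReal.ofReal (f n ^ 2) := by
      rw [lintegral_tsum fun n => by simp only [poissonWeight]; fun_prop]
      simp_rw [lintegral_mul_const' _ _ ENNReal.ofReal_ne_top, lintegral_poissonWeight, one_mul]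
    _ = ENNReal.ofReal (∑' n, f n ^ 2) :=
      (ENNReal.ofReal_tsum_of_nonneg (fun n => sq_nonneg _) hf).symm
end

section
/- The Poisson kernel Λ : ℓ²(ℤ≥0) → L²(ℝ≥0) is injective: if f ∈ ℓ²(ℤ≥0) and ∑_{n≥0} e^{-x} x^n f(n)/n! = 0 for almost every x > 0, then f = 0. -/
/-!
`e^x Λf(x) = ∑ f(n)/n! xⁿ` is a power series whose coefficients tend to zero, so it converges
near `0`. If `Λf` vanishes almost everywhere on `(0, ∞)`, this series has zeros accumulating at
`0`, and the principle of isolated zeros forces every coefficient `f(n)/n!` to vanish.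
-/

open MeasureTheory

open Filter Topology Set FormalMultilinearSeries

lemma tendsto_zero_of_summable_sq {f : ℕ → ℝ} (hf : Summable fun n => f n ^ 2) :
    Tendsto f atTop (𝓝 0) := by
  have h := (Real.continuous_sqrt.tendsto 0).comp hf.tendsto_atTop_zero
  simp only [Function.comp_def, Real.sqrt_sq_eq_abs, Real.sqrt_zero] at h
  exact (tendsto_zero_iff_abs_tendsto_zero f).mpr h

lemma Filter.Eventually.frequently_nhdsGT_of_ae_restrict_Ioi {α : Type*} [MeasurableSpace α]
    [TopologicalSpace α] [LinearOrder α] [OrderTopology α] [OpensMeasurableSpace α]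
    [DenselyOrdered α] [NoMaxOrder α] {μ : Measure α} [μ.IsOpenPosMeasure] {p : α → Prop} {a : α}
    (h : ∀ᵐ x ∂μ.restrict (Ioi a), p x) : ∃ᶠ x in 𝓝[>] a, p x := by
  rw [(nhdsGT_basis a).frequently_iff]
  intro b hab
  have hIoo : ∀ᵐ x ∂μ.restrict (Ioo a b), p x :=
    ae_restrict_of_ae_restrict_of_subset Ioo_subset_Ioi_self h
  have : (ae (μ.restrict (Ioo a b))).NeBot := by
    rw [ae_neBot, Ne, Measure.restrict_eq_zero]
    exact (isOpen_Ioo.measure_pos μ (nonempty_Ioo.mpr hab)).ne'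
  exact ((ae_restrict_mem measurableSet_Ioo).and hIoo).exists

namespace FormalMultilinearSeries

variable {𝕜 E : Type*} [NontriviallyNormedField 𝕜] [NormedRing E] [NormedAlgebra 𝕜 E]
  [NormOneClass E] {c : ℕ → 𝕜}

lemma one_le_ofScalars_radius (hc : Tendsto c atTop (𝓝 0)) : 1 ≤ (ofScalars E c).radius := by
  simpa using (ofScalars E c).le_radius_of_tendsto (r := 1) (by simpa using hc.norm)

lemma hasFPowerSeriesAt_ofScalarsSum [CompleteSpace E] (hc : Tendsto c atTop (𝓝 0)) :
    HasFPowerSeriesAt (ofScalarsSum (E := E) c) (ofScalars E c) 0 :=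
  ((ofScalars E c).hasFPowerSeriesOnBall
    (zero_lt_one.trans_le (one_le_ofScalars_radius hc))).hasFPowerSeriesAt

end FormalMultilinearSeries

lemma Lam_eq_exp_mul_ofScalarsSum (f : ℕ → ℝ) (x : ℝ) :
    Lam f x = Real.exp (-x) * ofScalarsSum (E := ℝ) (fun n => f n / n.factorial) x := by
  rw [Lam, ofScalars_sum_eq, ← tsum_mul_left]
  congr with n
  rw [smul_eq_mul]
  ring

/-- `Λ : ℓ²(ℤ₊) → L²(ℝ₊)` is injective: if `Λ f = 0` a.e. on `(0,∞)` then `f = 0`. -/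
theorem poisson_kernel_injective (f : ℕ → ℝ) (hf : Summable fun n => f n ^ 2)
    (h : ∀ᵐ x ∂(volume.restrict (Set.Ioi (0 : ℝ))), Lam f x = 0) :
    f = 0 := by
  set c : ℕ → ℝ := fun n => f n / n.factorial
  have hc : Tendsto c atTop (𝓝 0) :=
    (tendsto_zero_of_summable_sq hf).div_atTop
      (tendsto_natCast_atTop_atTop.comp factorial_tendsto_atTop)
  have hzeros : ∃ᶠ x in 𝓝[≠] (0 : ℝ), ofScalarsSum c x = 0 := by
    refine (h.frequently_nhdsGT_of_ae_restrict_Ioi.filter_mono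
      (nhdsWithin_mono 0 fun x hx => ne_of_gt hx)).mono fun x hx => ?_
    simpa [Lam_eq_exp_mul_ofScalarsSum, Real.exp_ne_zero] using hx
  have hseries : ofScalars ℝ c = 0 := by
    by_contra hne
    exact not_frequently.mpr ((hasFPowerSeriesAt_ofScalarsSum hc).locally_ne_zero hne) hzeros
  funext n
  simpa [c, Nat.factorial_ne_zero] using congrFun ((ofScalars_series_eq_zero ℝ).mp hseries) n
end

section
/- Fix l ∈ ℤ≥0 and a Lévy measure Π with ∫(y∧y²)Π(dy)<∞. Then lim_{n→∞} (1/(n+1)) ∫_0^∞ C(n+1,l) e^{-ly}(1-e^{-y})^{n-l+1} Π(dy) = 0. -/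
open MeasureTheory Filter

/-!
Write `t = e^{-y}`. Since `C(n+1,l) ≤ 4 C(n-1,l)` once `n > 2l`, and the Bernstein weight
`C(n-1,l) t^l (1-t)^{n-1-l}` is at most `1`, the integrand is at most
`4 (1-t)^2 ≤ 4 min(y, y²)` for all large `n`. The integrals are therefore bounded by
`4 ∫ min(y, y²) dΠ < ∞`, and the prefactor `1/(n+1)` sends the sequence to `0`.
-/

theorem Nat.choose_succ_le_two_mul_choose {n k : ℕ} (h : 2 * k ≤ n + 1) :
    (n + 1).choose k ≤ 2 * n.choose k := by
  have hk : 0 < n + 1 - k := by omega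
  refine Nat.le_of_mul_le_mul_right ?_ hk
  calc (n + 1).choose k * (n + 1 - k) = n.choose k * (n + 1) := (Nat.choose_mul_succ_eq n k).symm
    _ ≤ n.choose k * (2 * (n + 1 - k)) := Nat.mul_le_mul_left _ (by omega)
    _ = 2 * n.choose k * (n + 1 - k) := by ring

theorem choose_mul_pow_mul_one_sub_pow_le_one {t : ℝ} (ht₀ : 0 ≤ t) (ht₁ : t ≤ 1) (m k : ℕ) :
    (m.choose k : ℝ) * t ^ k * (1 - t) ^ (m - k) ≤ 1 := by
  rcases lt_or_ge m k with hmk | hkm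
  · simp [Nat.choose_eq_zero_of_lt hmk]
  have hbinom := add_pow t (1 - t) m
  rw [add_sub_cancel, one_pow] at hbinom
  calc (m.choose k : ℝ) * t ^ k * (1 - t) ^ (m - k) = t ^ k * (1 - t) ^ (m - k) * m.choose k := by
        ring
    _ ≤ ∑ i ∈ Finset.range (m + 1), t ^ i * (1 - t) ^ (m - i) * m.choose i := by
        have h1t : 0 ≤ 1 - t := by linarith
        exact Finset.single_le_sum (f := fun i => t ^ i * (1 - t) ^ (m - i) * m.choose i)
          (fun i _ => by positivity) (Finset.mem_range_succ_iff.mpr hkm)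
    _ = 1 := hbinom.symm

theorem one_sub_exp_neg_sq_le_min {y : ℝ} (hy : 0 ≤ y) :
    (1 - Real.exp (-y)) ^ 2 ≤ min y (y ^ 2) := by
  have h₀ : 0 ≤ 1 - Real.exp (-y) := by simp [hy]
  have h₁ : 1 - Real.exp (-y) ≤ 1 := by linarith [Real.exp_pos (-y)]
  have hy' : 1 - Real.exp (-y) ≤ y := by linarith [Real.add_one_le_exp (-y)]
  refine le_min ?_ (pow_le_pow_left₀ h₀ hy' 2)
  nlinarith

theorem choose_mul_exp_mul_one_sub_exp_pow_le {l n : ℕ} (hn : 2 * l < n) {y : ℝ} (hy : 0 ≤ y) :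
    ((n + 1).choose l : ℝ) * Real.exp (-(l : ℝ) * y) * (1 - Real.exp (-y)) ^ (n - l + 1)
      ≤ 4 * min y (y ^ 2) := by
  set t := Real.exp (-y)
  have ht₀ : 0 ≤ t := (Real.exp_pos _).le
  have ht₁ : t ≤ 1 := Real.exp_le_one_iff.mpr (by linarith)
  obtain ⟨m, rfl⟩ : ∃ m, n = m + 1 := ⟨n - 1, by omega⟩
  have hchoose : ((m + 2).choose l : ℝ) ≤ 4 * m.choose l := by
    have h₁ : (m + 2).choose l ≤ 2 * (m + 1).choose l :=
      Nat.choose_succ_le_two_mul_choose (by omega)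
    have h₂ := Nat.choose_succ_le_two_mul_choose (n := m) (k := l) (by omega)
    exact_mod_cast (by omega : (m + 2).choose l ≤ 4 * m.choose l)
  have hexp : Real.exp (-(l : ℝ) * y) = t ^ l := by
    rw [← Real.exp_nat_mul]; ring_nf
  have hbern := choose_mul_pow_mul_one_sub_pow_le_one ht₀ ht₁ m l
  have h1t : 0 ≤ 1 - t := by linarith
  calc ((m + 1 + 1).choose l : ℝ) * Real.exp (-(l : ℝ) * y) * (1 - t) ^ (m + 1 - l + 1)
      = ((m + 2).choose l : ℝ) * t ^ l * (1 - t) ^ (m - l) * (1 - t) ^ 2 := by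
        rw [hexp, show m + 1 - l + 1 = (m - l) + 2 by omega, pow_add]; ring
    _ ≤ 4 * (m.choose l * t ^ l * (1 - t) ^ (m - l)) * (1 - t) ^ 2 := by
        have := mul_le_mul_of_nonneg_right hchoose (by positivity : 0 ≤ t ^ l * (1 - t) ^ (m - l))
        gcongr ?_ * _
        linarith
    _ ≤ 4 * 1 * min y (y ^ 2) := by
        gcongr
        exact one_sub_exp_neg_sq_le_min hy
    _ = 4 * min y (y ^ 2) := by ring

/-- For fixed `l` and a Lévy measure `Π` with `∫(y ∧ y²)Π(dy) < ∞`,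
`(1/(n+1)) ∫_0^∞ C(n+1,l) e^{-ly}(1-e^{-y})^{n-l+1} Π(dy) → 0` as `n → ∞`. -/
theorem levy_generator_entries_vanish (μ : Measure ℝ)
    (hμ : ∫⁻ y in Set.Ioi (0 : ℝ), ENNReal.ofReal (min y (y ^ 2)) ∂μ < ⊤)
    (l : ℕ) :
    Tendsto
      (fun n : ℕ => (1 / ((n : ℝ) + 1)) *
        ∫ y in Set.Ioi (0 : ℝ), ((n + 1).choose l : ℝ) * Real.exp (-(l : ℝ) * y) *
          (1 - Real.exp (-y)) ^ (n - l + 1) ∂μ)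
      atTop (nhds 0) := by
  have hint : IntegrableOn (fun y : ℝ => 4 * min y (y ^ 2)) (Set.Ioi 0) μ := by
    refine Integrable.const_mul ⟨(continuous_id.min (continuous_pow 2)).aestronglyMeasurable, ?_⟩ 4
    refine (hasFiniteIntegral_iff_ofReal ?_).mpr hμ
    filter_upwards [ae_restrict_mem measurableSet_Ioi] with y hy
    exact le_min (le_of_lt hy) (by positivity)
  refine tendsto_one_div_add_atTop_nhds_zero_nat.zero_mul_isBoundedUnder_le ?_
  refine isBoundedUnder_of_eventually_le (a := ∫ y in Set.Ioi 0, 4 * min y (y ^ 2) ∂μ) ?_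
  filter_upwards [eventually_gt_atTop (2 * l)] with n hn
  refine norm_integral_le_of_norm_le hint ?_
  filter_upwards [ae_restrict_mem measurableSet_Ioi] with y (hy : 0 < y)
  have h1t : 0 ≤ 1 - Real.exp (-y) := by simp [hy.le]
  rw [Real.norm_of_nonneg (by positivity)]
  exact choose_mul_exp_mul_one_sub_exp_pow_le hn hy.le
end

section
/- Every discrete self-similar Markov chain on ℤ≥0 is upward skip-free: if a generator matrix 𝔾 on ℤ≥0 (with 𝔾(n,k) ≥ 0 for k ≠ n and row sums zero) satisfies, for all α ∈ (0,1) and n, l ∈ ℤ≥0, the commutation identity ∑_{k ≥ l} 𝔾(n,k) C(k,l) α^l (1-α)^{k-l} = ∑_{j ≤ n} α^{j+1}(1-α)^{n-j} C(n,j) 𝔾(j,l) (i.e. 𝔾𝔻_α = α𝔻_α𝔾), then 𝔾(n,k) = 0 for all k ≥ n+2. -/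
/-!
Induct on `n`. Evaluate the commutation identity at `l = n + 1`. By the induction hypothesis
`G j (n + 1) = 0` for `j < n`, so the right-hand side reduces to the `k = n + 1` term of the
left-hand series. Every other term of that series is nonnegative (the entries `G n k` with
`k ≥ n + 1` lie off the diagonal), so they all vanish; for `k ≥ n + 2` the binomial weight
`C(k, n+1) α^(n+1) (1-α)^(k-n-1)` is positive, hence `G n k = 0`.
-/

open Finset

theorem eq_zero_of_hasSum_self_of_nonneg {ι α : Type*} [AddCommGroup α] [PartialOrder α]
    [IsOrderedAddMonoid α] [TopologicalSpace α] [OrderClosedTopology α] {f : ι → α}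
    (hf : ∀ i, 0 ≤ f i) {i : ι} (h : HasSum f (f i)) {j : ι} (hji : j ≠ i) : f j = 0 := by
  classical
  have hpair : f i + f j ≤ f i := by
    simpa [sum_pair hji.symm] using sum_le_hasSum {i, j} (fun x _ => hf x) h
  exact le_antisymm (by simpa using hpair) (hf j)

theorem sum_range_succ_eq_last_of_lower_eq_zero {α : ℝ} {G : ℕ → ℕ → ℝ} {n l : ℕ}
    (hlow : ∀ j < n, G j l = 0) :
    ∑ j ∈ range (n + 1), α ^ (j + 1) * (1 - α) ^ (n - j) * (n.choose j : ℝ) * G j l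
      = α ^ (n + 1) * G n l := by
  rw [sum_range_succ, sum_eq_zero fun j hj => by rw [hlow j (mem_range.mp hj), mul_zero]]
  simp

theorem eq_zero_of_commutation_row (G : ℕ → ℕ → ℝ) (n : ℕ)
    (hpos : ∀ k, k ≠ n → 0 ≤ G n k) (hlow : ∀ j < n, G j (n + 1) = 0)
    {α : ℝ} (hα : α ∈ Set.Ioo (0 : ℝ) 1)
    (hcomm : HasSum (fun k => G n k * (k.choose (n + 1) : ℝ) * α ^ (n + 1) * (1 - α) ^ (k - (n + 1)))
        (∑ j ∈ range (n + 1), α ^ (j + 1) * (1 - α) ^ (n - j) * (n.choose j : ℝ) * G j (n + 1)))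
    {k : ℕ} (hk : n + 2 ≤ k) : G n k = 0 := by
  obtain ⟨hα0, hα1⟩ := hα
  have h1α : 0 < 1 - α := sub_pos.mpr hα1
  set f : ℕ → ℝ := fun i => G n i * (i.choose (n + 1) : ℝ) * α ^ (n + 1) * (1 - α) ^ (i - (n + 1))
  have hf : ∀ i, 0 ≤ f i := by
    intro i
    rcases le_or_gt i n with hin | hin
    · simp [f, Nat.choose_eq_zero_of_lt (Nat.lt_succ_of_le hin)]
    · have := hpos i hin.ne'
      positivity
  have hself : HasSum f (f (n + 1)) := by
    rwa [sum_range_succ_eq_last_of_lower_eq_zero hlow, show α ^ (n + 1) * G n (n + 1) = f (n + 1) by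
      simp [f, mul_comm]] at hcomm
  have hfk : f k = 0 := eq_zero_of_hasSum_self_of_nonneg hf hself (by omega)
  have hchoose : (0 : ℝ) < k.choose (n + 1) := by exact_mod_cast Nat.choose_pos (by omega)
  simp only [f, mul_assoc, mul_eq_zero] at hfk
  rcases hfk with h | h | h | h
  · exact h
  · exact absurd h hchoose.ne'
  · exact absurd h (pow_pos hα0 _).ne'
  · exact absurd h (pow_pos h1α _).ne'

theorem discrete_self_similar_skip_free_general (G : ℕ → ℕ → ℝ)
    (hpos : ∀ n k, k ≠ n → 0 ≤ G n k)
    (hcomm : ∀ α ∈ Set.Ioo (0 : ℝ) 1, ∀ n l : ℕ,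
      HasSum (fun k => G n k * (k.choose l : ℝ) * α ^ l * (1 - α) ^ (k - l))
        (∑ j ∈ Finset.range (n + 1),
          α ^ (j + 1) * (1 - α) ^ (n - j) * (n.choose j : ℝ) * G j l)) :
    ∀ n k, n + 2 ≤ k → G n k = 0 := by
  intro n
  induction n using Nat.strong_induction_on with
  | _ n ih =>
    have hhalf : (1 / 2 : ℝ) ∈ Set.Ioo (0 : ℝ) 1 := by norm_num
    exact fun k hk => eq_zero_of_commutation_row G n (hpos n) (fun j hj => ih j hj (n + 1) (by omega))
      hhalf (hcomm _ hhalf n (n + 1)) hk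

/-- Every discrete self-similar Markov chain is upward skip-free: if a generator matrix
`G` (nonnegative off the diagonal, rows summing to zero) satisfies the commutation
identity `𝔾 𝔻_α = α 𝔻_α 𝔾` for all `α ∈ (0,1)`, then `G n k = 0` whenever `k ≥ n + 2`. -/
theorem discrete_self_similar_skip_free (G : ℕ → ℕ → ℝ)
    (hpos : ∀ n k, k ≠ n → 0 ≤ G n k)
    (hrow : ∀ n, HasSum (fun k => G n k) 0)
    (hcomm : ∀ α ∈ Set.Ioo (0 : ℝ) 1, ∀ n l : ℕ,
      HasSum (fun k => G n k * (k.choose l : ℝ) * α ^ l * (1 - α) ^ (k - l))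
        (∑ j ∈ Finset.range (n + 1),
          α ^ (j + 1) * (1 - α) ^ (n - j) * (n.choose j : ℝ) * G j l)) :
    ∀ n k, n + 2 ≤ k → G n k = 0 :=
  discrete_self_similar_skip_free_general G hpos hcomm
end

section
/- Factorial moments of the skip-free Laguerre semigroup: 𝕂_t^φ p_k(n) = ∑_{l=0}^k C(k,l) (W_φ(k+1)/W_φ(l+1)) e^{-tl} (1-e^{-t})^{k-l} p_l(n) for all t ≥ 0 and k, n ∈ ℤ≥0. In particular lim_{t→∞} 𝕂_t^φ p_k(n) = W_φ(k+1). -/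
open Filter

/-- The falling factorial `p_k(n) = n!/(n-k)!` (zero if `k > n`). -/
def pfall (k n : ℕ) : ℝ := (n.descFactorial k : ℝ)

open Finset

/- The binomial dilation `𝔻_α` is diagonal on falling factorials, `𝔻_α p_k = α^k p_k`: the
factorial moments of a `Binomial(n, α)` law. Linearity of `ℚ_s` and the self-similar moment
formula then give `ℚ_s 𝔻_α p_k = ∑_l C(k,l) (W k / W l) α^l (α s)^(k-l) p_l`, and for
`α = e^{-t}`, `s = e^t - 1` one has `α s = 1 - e^{-t}`. As `t → ∞` only the `l = 0` term
survives, and it equals `W k` because `W 0 = 1` is an empty product. -/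

theorem Nat.add_choose_add_mul_descFactorial (k m j : ℕ) :
    (k + m).choose (k + j) * (k + j).descFactorial k = (k + m).descFactorial k * m.choose j := by
  rw [Nat.descFactorial_eq_factorial_mul_choose, Nat.descFactorial_eq_factorial_mul_choose,
    mul_left_comm, Nat.choose_mul (Nat.le_add_right k j), Nat.add_sub_cancel_left,
    Nat.add_sub_cancel_left]
  ring

theorem DD_pfall (α : ℝ) (k n : ℕ) : DD α (pfall k) n = α ^ k * pfall k n := by
  rcases lt_or_ge n k with hnk | hkn
  · have hzero : ∀ r ∈ range (n + 1), pfall k r = 0 := fun r hr =>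
      Nat.cast_eq_zero.mpr (Nat.descFactorial_eq_zero_iff_lt.mpr (by grind))
    rw [DD, sum_eq_zero fun r hr => by rw [hzero r hr, mul_zero], hzero n (self_mem_range_succ n),
      mul_zero]
  obtain ⟨m, rfl⟩ := Nat.exists_eq_add_of_le hkn
  calc DD α (pfall k) (k + m)
      = ∑ j ∈ range (m + 1), ((k + m).choose (k + j) : ℝ) * α ^ (k + j) *
          (1 - α) ^ (k + m - (k + j)) * pfall k (k + j) := by
        rw [DD, add_assoc, sum_range_add, sum_eq_zero fun r hr => by
          simp [pfall, Nat.descFactorial_eq_zero_iff_lt.mpr (mem_range.mp hr)], zero_add]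
    _ = α ^ k * pfall k (k + m) * ∑ j ∈ range (m + 1), α ^ j * (1 - α) ^ (m - j) * m.choose j := by
        rw [mul_sum]
        refine sum_congr rfl fun j _ => ?_
        have h := congrArg (Nat.cast (R := ℝ)) (Nat.add_choose_add_mul_descFactorial k m j)
        push_cast at h
        simp only [pfall, Nat.add_sub_add_left, pow_add]
        linear_combination (α ^ k * α ^ j * (1 - α) ^ (m - j)) * h
    _ = α ^ k * pfall k (k + m) := by rw [← add_pow, add_sub_cancel, one_pow, mul_one]

theorem Q_DD_pfall {W : ℕ → ℝ} {Q : ℝ → (ℕ → ℝ) → ℕ → ℝ} {s : ℝ}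
    (hQ : ∀ k n : ℕ, Q s (pfall k) n =
      ∑ l ∈ range (k + 1), (k.choose l : ℝ) * (W k / W l) * pfall l n * s ^ (k - l))
    (hlin : ∀ (c : ℝ) (f : ℕ → ℝ), Q s (fun m => c * f m) = fun n => c * Q s f n)
    (α : ℝ) (k n : ℕ) :
    Q s (DD α (pfall k)) n = ∑ l ∈ range (k + 1),
      (k.choose l : ℝ) * (W k / W l) * α ^ l * (α * s) ^ (k - l) * pfall l n := by
  simp only [show DD α (pfall k) = fun m => α ^ k * pfall k m from funext (DD_pfall α k), hlin,
    hQ, mul_sum]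
  refine sum_congr rfl fun l hl => ?_
  have hsplit : α ^ k = α ^ l * α ^ (k - l) := by
    rw [← pow_add, Nat.add_sub_cancel' (Nat.lt_succ_iff.mp (mem_range.mp hl))]
  rw [hsplit, mul_pow]
  ring

/-- Factorial moments of the skip-free Laguerre semigroup
`𝕂_t^φ = ℚ^φ_{e^t-1} 𝔻_{e^{-t}}`:
`𝕂_t^φ p_k(n) = ∑_{l=0}^k C(k,l)(W_φ(k+1)/W_φ(l+1)) e^{-tl}(1-e^{-t})^{k-l} p_l(n)`,
and in particular `𝕂_t^φ p_k(n) → W_φ(k+1)` as `t → ∞`. -/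
theorem laguerre_factorial_moments (φ : ℕ → ℝ) (W : ℕ → ℝ)
    (hW : ∀ k, W k = ∏ r ∈ Finset.range k, φ (r + 1))
    (Q : ℝ → (ℕ → ℝ) → ℕ → ℝ)
    (hQ : ∀ t ≥ (0 : ℝ), ∀ k n : ℕ,
      Q t (pfall k) n =
        ∑ l ∈ Finset.range (k + 1),
          (k.choose l : ℝ) * (W k / W l) * pfall l n * t ^ (k - l))
    (hlin : ∀ (t c : ℝ) (f : ℕ → ℝ),
      Q t (fun m => c * f m) = fun n => c * Q t f n) :
    ∀ k n : ℕ,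
      (∀ t ≥ (0 : ℝ),
        Q (Real.exp t - 1) (DD (Real.exp (-t)) (pfall k)) n =
          ∑ l ∈ Finset.range (k + 1),
            (k.choose l : ℝ) * (W k / W l) * Real.exp (-t) ^ l *
              (1 - Real.exp (-t)) ^ (k - l) * pfall l n) ∧
      Tendsto (fun t : ℝ => Q (Real.exp t - 1) (DD (Real.exp (-t)) (pfall k)) n)
        atTop (nhds (W k)) := by
  intro k n
  have formula : ∀ t ≥ (0 : ℝ), Q (Real.exp t - 1) (DD (Real.exp (-t)) (pfall k)) n =
      ∑ l ∈ range (k + 1), (k.choose l : ℝ) * (W k / W l) * Real.exp (-t) ^ l *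
        (1 - Real.exp (-t)) ^ (k - l) * pfall l n := fun t ht => by
    have hα : Real.exp (-t) * (Real.exp t - 1) = 1 - Real.exp (-t) := by
      rw [mul_sub, ← Real.exp_add, neg_add_cancel, Real.exp_zero, mul_one]
    rw [Q_DD_pfall (hQ _ (by linarith [Real.add_one_le_exp t])) (hlin _), hα]
  refine ⟨formula, ?_⟩
  set P : ℝ → ℝ := fun x => ∑ l ∈ range (k + 1),
    (k.choose l : ℝ) * (W k / W l) * x ^ l * (1 - x) ^ (k - l) * pfall l n
  have hP0 : P 0 = W k := by simp [P, sum_range_succ', pfall, hW]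
  have hP : Continuous P := by fun_prop
  rw [← hP0]
  exact ((hP.tendsto 0).comp Real.tendsto_exp_neg_atTop_nhds_zero).congr'
    ((eventually_ge_atTop 0).mono fun t ht => (formula t ht).symm)
end
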